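/- arXiv:2009.09952 — 6 statements merged into one kernel-verified Lean document; each statement's English description precedes it below -/
import Mathlib

section
/- Let G be a topological group and P ≤ G a closed subgroup. Assume that for every g ∈ G the pair (P, P ∩ gPg⁻¹) has the Mautner property, and that every intermediate closed subgroup P ≤ Q ≤ G equals its own normalizer in G (P is stably self-normalizing). Then the pair (G,P) has the Mautner property: in any continuous isometric action of G on a metric space, every P-fixed point is G-fixed. -/
/-- The pair `(P, A)` has the Mautner property: in every continuous isometric action of the
subgroup `P` (with its induced topology) on a metric space, every point fixed by all elements
of `P` that lie in `A` is fixed by all of `P`. -/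
def MautnerPair {G : Type*} [Group G] [TopologicalSpace G] (P A : Subgroup G) : Prop :=
  ∀ (X : Type) [MetricSpace X] (φ : P →* (X ≃ᵢ X)),
    Continuous (fun q : P × X => φ q.1 q.2) →
    ∀ x : X, (∀ a : P, (a : G) ∈ A → φ a x = x) → ∀ p : P, φ p x = x

/-!
The points of `X` fixed by a continuous isometric action form a closed subgroup `S` of `G`, the
stabilizer. If `P` fixes `x`, then `gPg⁻¹ ∩ P` fixes `g x`, so by the relative Mautner property
`P` fixes `g x`, i.e. `g⁻¹Pg ≤ S`. Hence `P` lies in the normal core of `S`, a closed normal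
subgroup, which by stable self-normalization is all of `G`.
-/

section IsometryStabilizer

variable {G : Type*} [Group G] {X : Type*} [PseudoEMetricSpace X]

def isometryStabilizer (φ : G →* (X ≃ᵢ X)) (x : X) : Subgroup G where
  carrier := {g | φ g x = x}
  one_mem' := by simp
  mul_mem' {a b} ha hb := by
    simp only [Set.mem_ofPred_eq, map_mul, IsometryEquiv.mul_apply] at ha hb ⊢
    rw [hb, ha]
  inv_mem' {a} ha := by
    simp only [Set.mem_ofPred_eq, map_inv] at ha ⊢
    conv_lhs => rw [← ha]
    exact IsometryEquiv.inv_apply_self _ x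

variable (φ : G →* (X ≃ᵢ X))

theorem mem_isometryStabilizer {x : X} {g : G} : g ∈ isometryStabilizer φ x ↔ φ g x = x :=
  Iff.rfl

theorem isometryStabilizer_apply (g : G) (x : X) :
    isometryStabilizer φ (φ g x) = (isometryStabilizer φ x).map (MulAut.conj g).toMonoidHom := by
  ext h
  rw [Subgroup.mem_map_equiv, mem_isometryStabilizer, mem_isometryStabilizer,
    MulAut.conj_symm_apply, map_mul, map_mul, map_inv, IsometryEquiv.mul_apply,
    IsometryEquiv.mul_apply]
  exact (φ g).symm_apply_eq.symm

theorem isClosed_isometryStabilizer [TopologicalSpace G] [T2Space X]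
    (hφ : Continuous fun q : G × X => φ q.1 q.2) (x : X) :
    IsClosed (isometryStabilizer φ x : Set G) :=
  isClosed_eq (hφ.comp (continuous_id.prodMk continuous_const)) continuous_const

end IsometryStabilizer

section Mautner

variable {G : Type*} [Group G] [TopologicalSpace G] {P : Subgroup G}
  {X : Type} [MetricSpace X] {φ : G →* (X ≃ᵢ X)}

theorem MautnerPair.le_isometryStabilizer {A : Subgroup G} (hPA : MautnerPair P A)
    (hφ : Continuous fun q : G × X => φ q.1 q.2) {x : X} (hx : P ⊓ A ≤ isometryStabilizer φ x) :
    P ≤ isometryStabilizer φ x := fun p hp =>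
  hPA X (φ.comp P.subtype) (hφ.comp (continuous_subtype_val.prodMap continuous_id)) x
    (fun a ha => hx ⟨a.2, ha⟩) ⟨p, hp⟩

theorem le_isometryStabilizer_apply
    (hrel : ∀ g : G, MautnerPair P (P ⊓ P.map (MulAut.conj g).toMonoidHom))
    (hφ : Continuous fun q : G × X => φ q.1 q.2) {x : X} (hx : P ≤ isometryStabilizer φ x)
    (g : G) : P ≤ isometryStabilizer φ (φ g x) := by
  refine (hrel g).le_isometryStabilizer hφ ?_
  rw [isometryStabilizer_apply]
  exact inf_le_right.trans (inf_le_right.trans (Subgroup.map_mono hx))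

theorem le_normalCore_isometryStabilizer
    (hrel : ∀ g : G, MautnerPair P (P ⊓ P.map (MulAut.conj g).toMonoidHom))
    (hφ : Continuous fun q : G × X => φ q.1 q.2) {x : X} (hx : P ≤ isometryStabilizer φ x) :
    P ≤ (isometryStabilizer φ x).normalCore := by
  rw [Subgroup.normalCore_eq_iInf_map_conj, le_iInf_iff]
  intro g
  rw [← MulEquiv.toMonoidHom_eq_coe, ← isometryStabilizer_apply]
  exact le_isometryStabilizer_apply hrel hφ hx g

end Mautner

def Subgroup.IsStablySelfNormalizing {G : Type*} [Group G] [TopologicalSpace G]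
    (P : Subgroup G) : Prop :=
  ∀ Q : Subgroup G, P ≤ Q → IsClosed (Q : Set G) → Subgroup.normalizer (Q : Set G) = Q

theorem Subgroup.IsStablySelfNormalizing.eq_top_of_normal {G : Type*} [Group G]
    [TopologicalSpace G] {P : Subgroup G} (hP : P.IsStablySelfNormalizing)
    {N : Subgroup G} [N.Normal] (hPN : P ≤ N) (hN : IsClosed (N : Set G)) : N = ⊤ := by
  rw [← hP N hPN hN]
  exact Subgroup.normalizer_eq_top_iff.mpr ‹_›

theorem mautner_of_relative_mautner_of_stably_self_normalizing_general
    {G : Type*} [Group G] [TopologicalSpace G] [IsTopologicalGroup G]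
    (P : Subgroup G)
    (hrel : ∀ g : G, MautnerPair P (P ⊓ Subgroup.map (MulAut.conj g).toMonoidHom P))
    (hsn : ∀ Q : Subgroup G, P ≤ Q → IsClosed (Q : Set G) → Subgroup.normalizer (Q : Set G) = Q) :
    ∀ (X : Type) [MetricSpace X] (φ : G →* (X ≃ᵢ X)),
      Continuous (fun q : G × X => φ q.1 q.2) →
      ∀ x : X, (∀ p ∈ P, φ p x = x) → ∀ g : G, φ g x = x := by
  intro X _ φ hφ x hx g
  have hS := isClosed_isometryStabilizer φ hφ x
  have hcore : (isometryStabilizer φ x).normalCore = ⊤ :=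
    Subgroup.IsStablySelfNormalizing.eq_top_of_normal hsn
      (le_normalCore_isometryStabilizer hrel hφ hx) (Subgroup.normalCore_isClosed _ hS)
  exact Subgroup.normalCore_le _ (hcore ▸ Subgroup.mem_top g)

/-- if P is a closed subgroup of G such that (P, P ∩ gPg⁻¹) has the Mautner
property for every g ∈ G, and P is stably self-normalizing (every intermediate closed
subgroup is its own normalizer), then the pair (G, P) has the Mautner property. -/
theorem mautner_of_relative_mautner_of_stably_self_normalizing
    {G : Type*} [Group G] [TopologicalSpace G] [IsTopologicalGroup G]
    (P : Subgroup G) (hPclosed : IsClosed (P : Set G))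
    (hrel : ∀ g : G, MautnerPair P (P ⊓ Subgroup.map (MulAut.conj g).toMonoidHom P))
    (hsn : ∀ Q : Subgroup G, P ≤ Q → IsClosed (Q : Set G) → Subgroup.normalizer (Q : Set G) = Q) :
    ∀ (X : Type) [MetricSpace X] (φ : G →* (X ≃ᵢ X)),
      Continuous (fun q : G × X => φ q.1 q.2) →
      ∀ x : X, (∀ p ∈ P, φ p x = x) → ∀ g : G, φ g x = x :=
  mautner_of_relative_mautner_of_stably_self_normalizing_general P hrel hsn
end

section
/- Let Γ be a countable discrete group and let ψ be a state on the full group C*-algebra C*(Γ) (equivalently, a normalized positive definite function on Γ). If for every g ∈ Γ \ {e} the state ψ and its translate g·ψ (defined by (g·ψ)(x) = ψ(u_g* x u_g)) satisfy ‖ψ − g·ψ‖ = 2 (i.e. they are singular), then ψ(u_g) = 0 for every g ≠ e; in particular ψ is the canonical regular trace δ_e. -/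
open scoped ComplexOrder

/-!
Write `U = u_g`. If `‖ψ - ψ ∘ Ad U‖ > 2 - δ`, some contraction `x` has `Re ψ(x) ≥ 1 - δ`
and `Re ψ(U* x U) ≤ δ - 1`. Cauchy–Schwarz for the positive functional `ψ` then gives
`|ψ((1 - x) U)|² ≤ ψ((1 - x)(1 - x)*) ≤ 2δ` and
`|ψ((1 + x) U)|² ≤ ψ(U* (1 + x)* (1 + x) U) ≤ 2δ`,
and these two terms add up to `2 ψ(U)`. Letting `δ → 0` gives `ψ(U) = 0`.
-/

theorem ContinuousLinearMap.exists_norm_le_one_lt_re_apply {𝕜 E : Type*} [RCLike 𝕜]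
    [NormedAddCommGroup E] [NormedSpace 𝕜 E] (φ : E →L[𝕜] 𝕜) {r : ℝ} (hr : r < ‖φ‖) :
    ∃ x : E, ‖x‖ ≤ 1 ∧ r < RCLike.re (φ x) := by
  obtain ⟨x, hx, hrx⟩ := φ.exists_lt_apply_of_lt_opNorm hr
  set z := φ x
  refine ⟨(starRingEnd 𝕜 z / ‖z‖) • x, ?_, ?_⟩
  · have : ‖starRingEnd 𝕜 z / ‖z‖‖ ≤ 1 := by
      rw [norm_div, RCLike.norm_conj, RCLike.norm_ofReal, abs_norm]
      exact div_self_le_one _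
    rw [norm_smul]
    nlinarith [norm_nonneg x, norm_nonneg (starRingEnd 𝕜 z / ‖z‖)]
  · rw [map_smul, smul_eq_mul, div_mul_eq_mul_div, RCLike.conj_mul, sq, mul_self_div_self,
      RCLike.ofReal_re]
    exact hrx

namespace PositiveLinearMap

variable {A : Type*} [CStarAlgebra A] [PartialOrder A] [StarOrderedRing A] (f : A →ₚ[ℂ] ℂ)

theorem norm_apply_star_mul_sq_le (a b : A) :
    ‖f (star a * b)‖ ^ 2 ≤ (f (star a * a)).re * (f (star b * b)).re := by
  have h := inner_mul_inner_self_le (𝕜 := ℂ) (f.toPreGNS a) (f.toPreGNS b)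
  rwa [norm_inner_symm (f.toPreGNS b), ← sq] at h

variable {f}

theorem re_apply_star_mul_self_le (hf : f 1 = 1) {x : A} (hx : ‖x‖ ≤ 1) :
    (f (star x * x)).re ≤ 1 := by
  have h := f.norm_apply_le_of_nonneg _ (star_mul_self_nonneg x)
  rw [hf, norm_one, one_mul, CStarRing.norm_star_mul_self] at h
  calc (f (star x * x)).re ≤ ‖f (star x * x)‖ := Complex.re_le_norm _
    _ ≤ ‖x‖ * ‖x‖ := h
    _ ≤ 1 := by nlinarith [norm_nonneg x]

theorem re_apply_star_mul_self_one_add_mul_unitary_le (hf : f 1 = 1) (U : unitary A) {x : A}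
    (hx : ‖x‖ ≤ 1) :
    (f (star ((1 + x) * U) * ((1 + x) * U))).re ≤ 2 + 2 * (f (star (U : A) * x * U)).re := by
  have hUU : star (U : A) * U = 1 := Unitary.star_mul_self_of_mem U.prop
  have expand : star ((1 + x) * U) * ((1 + x) * U) =
      star (U : A) * U + star (U : A) * x * U + star (star (U : A) * x * U)
        + star (x * U) * (x * U) := by
    simp only [star_mul, star_add, star_one, star_star]
    noncomm_ring
  have hxU : (f (star (x * U) * (x * U))).re ≤ 1 :=
    re_apply_star_mul_self_le hf (by rwa [CStarRing.norm_mul_coe_unitary])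
  rw [expand, map_add, map_add, map_add, hUU, hf, map_star]
  simp only [Complex.add_re, Complex.one_re, Complex.star_def, Complex.conj_re]
  linarith

theorem re_apply_one_sub_mul_star_le (hf : f 1 = 1) {x : A} (hx : ‖x‖ ≤ 1) :
    (f ((1 - x) * star (1 - x))).re ≤ 2 - 2 * (f x).re := by
  have expand : (1 - x) * star (1 - x) = 1 - x - star x + star (star x) * star x := by
    simp only [star_sub, star_one, star_star]
    noncomm_ring
  have hxx : (f (star (star x) * star x)).re ≤ 1 :=
    re_apply_star_mul_self_le hf (by rwa [norm_star])
  rw [expand, map_add, map_sub, map_sub, hf, map_star]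
  simp only [Complex.add_re, Complex.sub_re, Complex.one_re, Complex.star_def, Complex.conj_re]
  linarith

theorem norm_apply_unitary_sq_le (hf : f 1 = 1) (U : unitary A) {x : A} (hx : ‖x‖ ≤ 1) :
    ‖f U‖ ^ 2 ≤ 2 - (f x - f (star (U : A) * x * U)).re := by
  have hminus : ‖f ((1 - x) * U)‖ ^ 2 ≤ 2 - 2 * (f x).re := by
    have h := norm_apply_star_mul_sq_le f (star (1 - x)) U
    rw [star_star, Unitary.star_mul_self_of_mem U.prop, hf, Complex.one_re, mul_one] at h
    exact h.trans (re_apply_one_sub_mul_star_le hf hx)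
  have hplus : ‖f ((1 + x) * U)‖ ^ 2 ≤ 2 + 2 * (f (star (U : A) * x * U)).re := by
    have h := norm_apply_star_mul_sq_le f 1 ((1 + x) * U)
    rw [star_one, one_mul, one_mul, hf, Complex.one_re, one_mul] at h
    exact h.trans (re_apply_star_mul_self_one_add_mul_unitary_le hf U hx)
  have hsum : f ((1 - x) * U) + f ((1 + x) * U) = 2 * f U := by
    rw [← map_add, show (1 - x) * (U : A) + (1 + x) * U = U + U by noncomm_ring, map_add,
      two_mul]
  have htri : 2 * ‖f U‖ ≤ ‖f ((1 - x) * U)‖ + ‖f ((1 + x) * U)‖ := by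
    simpa [hsum] using norm_add_le (f ((1 - x) * U)) (f ((1 + x) * U))
  rw [Complex.sub_re]
  nlinarith [sq_nonneg (‖f ((1 - x) * U)‖ - ‖f ((1 + x) * U)‖), norm_nonneg (f U)]

end PositiveLinearMap

namespace ContinuousLinearMap

theorem apply_unitary_eq_zero_of_norm_sub_conj_eq_two {A : Type*}
    [CStarAlgebra A] [PartialOrder A] [StarOrderedRing A] (ψ : A →L[ℂ] ℂ)
    (hψ : ∀ a, 0 ≤ a → 0 ≤ ψ a) (hψ1 : ψ 1 = 1) (U : unitary A)
    (h : ‖ψ - ψ.comp (mulLeftRight ℂ A (star (U : A)) U)‖ = 2) : ψ U = 0 := by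
  have hsmall : ∀ ε > 0, ‖ψ U‖ ^ 2 < ε := by
    intro ε hε
    obtain ⟨x, hx, hlt⟩ :=
      (ψ - ψ.comp (mulLeftRight ℂ A (star (U : A)) U)).exists_norm_le_one_lt_re_apply
        (r := 2 - ε) (by linarith)
    rw [sub_apply, comp_apply, mulLeftRight_apply, RCLike.re_to_complex] at hlt
    have hU : ‖ψ U‖ ^ 2 ≤ 2 - (ψ x - ψ (star (U : A) * x * U)).re :=
      (PositiveLinearMap.mk₀ ψ.toLinearMap hψ).norm_apply_unitary_sq_le hψ1 U hx
    linarith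
  by_contra hne
  exact lt_irrefl _ (hsmall _ (by positivity))

end ContinuousLinearMap

theorem state_is_regular_trace_of_singular_translates_general
    {Γ : Type*} [Group Γ]
    {A : Type*} [NormedRing A] [StarRing A] [CStarRing A] [NormedAlgebra ℂ A]
    [CompleteSpace A] [StarModule ℂ A]
    (u : Γ →* unitary A)
    (ψ : A →L[ℂ] ℂ) (hψpos : ∀ a : A, 0 ≤ ψ (star a * a)) (hψ1 : ψ 1 = 1)
    (hsing : ∀ g : Γ, g ≠ 1 →
      ‖ψ - ψ.comp (ContinuousLinearMap.mulLeftRight ℂ A (star ((u g : A))) ((u g : A)))‖ = 2) :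
    ∀ g : Γ, g ≠ 1 → ψ ((u g : A)) = 0 := by
  intro g hg
  let _ : CStarAlgebra A := { }
  let _ := CStarAlgebra.spectralOrder A
  have := CStarAlgebra.spectralOrderedRing A
  refine ψ.apply_unitary_eq_zero_of_norm_sub_conj_eq_two (fun a ha => ?_) hψ1 (u g) (hsing g hg)
  obtain ⟨b, rfl⟩ := CStarAlgebra.nonneg_iff_eq_star_mul_self.mp ha
  exact hψpos b

/-- let Γ be a countable discrete group, u : Γ → A the canonical unitaries of a
C*-algebra generated by a unitary representation of Γ (e.g. A = C*(Γ)), and ψ a state on A.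
If for every g ≠ e the state ψ and its conjugation translate g·ψ : x ↦ ψ(u_g* x u_g) are
singular (‖ψ − g·ψ‖ = 2), then ψ(u_g) = 0 for every g ≠ e, i.e. ψ is the regular trace δ_e. -/
theorem state_is_regular_trace_of_singular_translates
    {Γ : Type*} [Group Γ] [Countable Γ]
    {A : Type*} [NormedRing A] [StarRing A] [CStarRing A] [NormedAlgebra ℂ A]
    [CompleteSpace A] [StarModule ℂ A]
    (u : Γ →* unitary A)
    (ψ : A →L[ℂ] ℂ) (hψpos : ∀ a : A, 0 ≤ ψ (star a * a)) (hψ1 : ψ 1 = 1)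
    (hsing : ∀ g : Γ, g ≠ 1 →
      ‖ψ - ψ.comp (ContinuousLinearMap.mulLeftRight ℂ A (star ((u g : A))) ((u g : A)))‖ = 2) :
    ∀ g : Γ, g ≠ 1 → ψ ((u g : A)) = 0 :=
  state_is_regular_trace_of_singular_translates_general u ψ hψpos hψ1 hsing
end

section
/- Let Γ be a countable discrete group acting on a probability space (X, μ) by measure-preserving transformations. Then the function φ: Γ → [0,1] defined by φ(g) = μ(Fix(g)), where Fix(g) = {x ∈ X : g·x = x}, is a character of Γ (a conjugation-invariant normalized positive definite function). -/
/-!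
For `g₁, …, gₙ ∈ Γ`, the matrix `μ(Fix(gⱼ⁻¹gᵢ)) = μ{x | gᵢx = gⱼx}` is the integral over `x` of
the matrix `[gᵢx = gⱼx]`, which is the Gram matrix of the unit vectors `δ_{gᵢx}` in `ℓ²(X)` and
hence positive semidefinite for every `x`. Conjugation invariance holds because `Fix(h⁻¹gh)` is
the preimage of `Fix(g)` under the measure-preserving map `x ↦ h • x`.
-/

open scoped ComplexOrder

/-- A function φ : Γ → ℂ is positive definite if all the Gram-type sums
Σᵢⱼ cᵢ·conj(cⱼ)·φ(gⱼ⁻¹gᵢ) are nonnegative. -/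
def IsPosDefFn {Γ : Type*} [Group Γ] (φ : Γ → ℂ) : Prop :=
  ∀ (n : ℕ) (g : Fin n → Γ) (c : Fin n → ℂ),
    0 ≤ ∑ i, ∑ j, c i * (starRingEnd ℂ) (c j) * φ ((g j)⁻¹ * g i)

open MeasureTheory MulAction
open scoped ComplexConjugate InnerProductSpace

lemma sum_mul_conj_mul_inner_nonneg {E ι : Type*} [SeminormedAddCommGroup E]
    [InnerProductSpace ℂ E] [Fintype ι] (w : ι → E) (c : ι → ℂ) :
    0 ≤ ∑ i, ∑ j, c i * conj (c j) * ⟪w j, w i⟫_ℂ := by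
  have hsum : ∑ i, ∑ j, c i * conj (c j) * ⟪w j, w i⟫_ℂ
      = ⟪∑ j, c j • w j, ∑ i, c i • w i⟫_ℂ := by
    simp only [sum_inner, inner_sum, inner_smul_left, inner_smul_right, Finset.mul_sum,
      mul_assoc]
  rw [hsum, inner_self_eq_norm_sq_to_K]
  exact pow_nonneg (RCLike.ofReal_nonneg.2 (norm_nonneg _)) 2

lemma sum_mul_conj_mul_ite_eq_nonneg {α ι : Type*} [DecidableEq α] [Fintype ι] (v : ι → α)
    (c : ι → ℂ) :
    0 ≤ ∑ i, ∑ j, c i * conj (c j) * if v i = v j then 1 else 0 := by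
  let δ : α → lp (fun _ : α => ℂ) 2 := fun a => lp.single 2 a 1
  have hδ : ∀ i j, ⟪δ (v j), δ (v i)⟫_ℂ = if v i = v j then 1 else 0 := by
    intro i j
    simp [δ, lp.inner_single_left, lp.single_apply, Pi.single_apply, eq_comm]
  simpa only [hδ] using sum_mul_conj_mul_inner_nonneg (fun i => δ (v i)) c

lemma sum_mul_conj_mul_measureReal_nonneg {X ι : Type*} [MeasurableSpace X] [Fintype ι]
    (μ : Measure X) [IsFiniteMeasure μ] {A : ι → ι → Set X}
    (hA : ∀ i j, MeasurableSet (A i j)) (c : ι → ℂ)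
    (h : ∀ x, 0 ≤ ∑ i, ∑ j, c i * conj (c j) * (A i j).indicator 1 x) :
    0 ≤ ∑ i, ∑ j, c i * conj (c j) * (μ.real (A i j) : ℂ) := by
  have hint : ∀ i j, Integrable (fun x => c i * conj (c j) * (A i j).indicator (1 : X → ℂ) x) μ :=
    fun i j => ((integrable_const 1).indicator (hA i j)).const_mul _
  calc (0 : ℂ) ≤ ∫ x, ∑ i, ∑ j, c i * conj (c j) * (A i j).indicator 1 x ∂μ :=
        integral_nonneg h
    _ = _ := by
      rw [integral_finsetSum _ fun i _ => integrable_finsetSum _ fun j _ => hint i j]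
      refine Finset.sum_congr rfl fun i _ => ?_
      rw [integral_finsetSum _ fun j _ => hint i j]
      refine Finset.sum_congr rfl fun j _ => ?_
      rw [integral_const_mul, Pi.one_def, integral_indicator_const _ (hA i j)]
      simp

lemma isPosDefFn_measureReal_fixedBy {Γ X : Type*} [Group Γ] [MulAction Γ X] [MeasurableSpace X]
    (μ : Measure X) [IsFiniteMeasure μ] (hmeas : ∀ g : Γ, MeasurableSet (fixedBy X g)) :
    IsPosDefFn (fun g : Γ => (μ.real (fixedBy X g) : ℂ)) := by
  classical
  intro n g c
  refine sum_mul_conj_mul_measureReal_nonneg μ (fun i j => hmeas _) c fun x => ?_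
  have hfix : ∀ i j, (fixedBy X ((g j)⁻¹ * g i)).indicator (1 : X → ℂ) x
      = if g i • x = g j • x then 1 else 0 := by
    intro i j
    simp [Set.indicator_apply, mul_smul, inv_smul_eq_iff]
  simpa only [hfix] using sum_mul_conj_mul_ite_eq_nonneg (fun i => g i • x) c

lemma measure_fixedBy_conj {Γ X : Type*} [Group Γ] [MulAction Γ X] [MeasurableSpace X]
    (μ : Measure X) {g h : Γ} (hg : MeasurableSet (fixedBy X g))
    (hh : MeasurePreserving (fun x : X => h • x) μ μ) :
    μ (fixedBy X (h⁻¹ * g * h)) = μ (fixedBy X g) := by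
  have hpre : fixedBy X (h⁻¹ * g * h) = (fun x : X => h • x) ⁻¹' fixedBy X g := by
    rw [Set.preimage_smul, smul_fixedBy, inv_inv]
  rw [hpre, hh.measure_preimage hg.nullMeasurableSet]

theorem fixed_point_measure_is_character_general
    {Γ X : Type*} [Group Γ] [MulAction Γ X]
    [MeasurableSpace X] (μ : MeasureTheory.Measure X) [MeasureTheory.IsProbabilityMeasure μ]
    (hmeas : ∀ g : Γ, MeasurableSet {x : X | g • x = x})
    (hmp : ∀ g : Γ, MeasureTheory.MeasurePreserving (fun x : X => g • x) μ μ) :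
    IsPosDefFn (fun g : Γ => ((μ {x : X | g • x = x}).toReal : ℂ)) ∧
      ((μ {x : X | (1 : Γ) • x = x}).toReal : ℂ) = 1 ∧
      ∀ g h : Γ, μ {x : X | (h⁻¹ * g * h) • x = x} = μ {x : X | g • x = x} :=
  ⟨isPosDefFn_measureReal_fixedBy μ hmeas, by simp,
    fun g h => measure_fixedBy_conj μ (hmeas g) (hmp h)⟩

/-- for a measure-preserving action of a countable group Γ on a probability
space (X, μ), the function g ↦ μ(Fix(g)) is a character of Γ: it is positive definite,
normalized, and conjugation-invariant. -/
theorem fixed_point_measure_is_character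
    {Γ X : Type*} [Group Γ] [Countable Γ] [MulAction Γ X]
    [MeasurableSpace X] (μ : MeasureTheory.Measure X) [MeasureTheory.IsProbabilityMeasure μ]
    (hmeas : ∀ g : Γ, MeasurableSet {x : X | g • x = x})
    (hmp : ∀ g : Γ, MeasureTheory.MeasurePreserving (fun x : X => g • x) μ μ) :
    IsPosDefFn (fun g : Γ => ((μ {x : X | g • x = x}).toReal : ℂ)) ∧
      ((μ {x : X | (1 : Γ) • x = x}).toReal : ℂ) = 1 ∧
      ∀ g h : Γ, μ {x : X | (h⁻¹ * g * h) • x = x} = μ {x : X | g • x = x} :=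
  fixed_point_measure_is_character_general μ hmeas hmp
end

section
/- Let Γ be a countable group which is an increasing union Γ = ⋃ₙ Γₙ of subgroups. Let C ⊆ PD₁(Γ) be a nonempty compact convex subset invariant under conjugation by Γ. If for every n, every nonempty compact convex Γₙ-invariant subset of PD₁(Γₙ) contains a Γₙ-invariant point, then C contains a Γ-invariant point (a character). -/
open scoped ComplexOrder

/-- The set of normalized positive definite functions on Γ. -/
def PD1 (Γ : Type*) [Group Γ] : Set (Γ → ℂ) :=
  {φ | IsPosDefFn φ ∧ φ 1 = 1}

/-- A function is conjugation-invariant (a character when in PD₁). -/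
def ConjInvFn {Γ : Type*} [Group Γ] (φ : Γ → ℂ) : Prop :=
  ∀ g x : Γ, φ (g⁻¹ * x * g) = φ x

/-- A set of functions on Γ is invariant under the conjugation action of Γ. -/
def ConjInvSet (Γ : Type*) [Group Γ] (C : Set (Γ → ℂ)) : Prop :=
  ∀ φ ∈ C, ∀ g : Γ, (fun x => φ (g⁻¹ * x * g)) ∈ C

open Set

/-!
Let `Cₙ ⊆ C` consist of the points whose restriction to `Γₙ` is `Γₙ`-conjugation-invariant.
Restriction to `Γₙ` maps `C` onto a nonempty compact convex `Γₙ`-invariant subset of `PD₁(Γₙ)`,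
so the hypothesis on `Γₙ` makes `Cₙ` nonempty. The `Cₙ` are closed and decreasing in the compact
set `C`, so they have a common point, and that point is invariant under all of `Γ = ⋃ₙ Γₙ`.
-/

section Restriction

variable {Γ Λ : Type*} [Group Γ] [Group Λ]

theorem IsPosDefFn.comp_monoidHom {φ : Γ → ℂ} (hφ : IsPosDefFn φ) (f : Λ →* Γ) :
    IsPosDefFn (φ ∘ f) := by
  intro n g c
  simpa only [Function.comp_apply, map_mul, map_inv] using hφ n (f ∘ g) c

theorem comp_mem_PD1 {φ : Γ → ℂ} (hφ : φ ∈ PD1 Γ) (f : Λ →* Γ) : φ ∘ f ∈ PD1 Λ :=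
  ⟨hφ.1.comp_monoidHom f, by simpa only [Function.comp_apply, map_one] using hφ.2⟩

theorem ConjInvSet.image_comp {C : Set (Γ → ℂ)} (hC : ConjInvSet Γ C) (f : Λ →* Γ) :
    ConjInvSet Λ ((· ∘ f) '' C) := by
  rintro _ ⟨φ, hφ, rfl⟩ g
  refine ⟨fun y => φ ((f g)⁻¹ * y * f g), hC φ hφ (f g), ?_⟩
  funext x
  simp only [Function.comp_apply, map_mul, map_inv]

end Restriction

section InvariantOnSubgroup

variable {Γ : Type*} [Group Γ]

def conjInvOn (H : Subgroup Γ) : Set (Γ → ℂ) :=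
  {φ | ∀ g ∈ H, ∀ x ∈ H, φ (g⁻¹ * x * g) = φ x}

theorem isClosed_conjInvOn (H : Subgroup Γ) : IsClosed (conjInvOn H) := by
  simp only [conjInvOn, ofPred_forall]
  exact isClosed_biInter fun g _ => isClosed_biInter fun x _ =>
    isClosed_eq (continuous_apply _) (continuous_apply _)

theorem conjInvOn_anti : Antitone (conjInvOn (Γ := Γ)) :=
  fun _ _ hHK _ hφ g hg x hx => hφ g (hHK hg) x (hHK hx)

theorem conjInvFn_comp_subtype_iff {H : Subgroup Γ} {φ : Γ → ℂ} :
    ConjInvFn (φ ∘ H.subtype) ↔ φ ∈ conjInvOn H :=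
  ⟨fun h g hg x hx => h ⟨g, hg⟩ ⟨x, hx⟩, fun h g x => h g g.2 x x.2⟩

theorem conjInvFn_of_forall_mem_conjInvOn {Γn : ℕ → Subgroup Γ} (hmono : Monotone Γn)
    (hunion : ∀ g : Γ, ∃ n, g ∈ Γn n) {φ : Γ → ℂ} (hφ : ∀ n, φ ∈ conjInvOn (Γn n)) :
    ConjInvFn φ := by
  intro g x
  obtain ⟨m, hm⟩ := hunion g
  obtain ⟨k, hk⟩ := hunion x
  exact hφ (max m k) g (hmono (le_max_left m k) hm) x (hmono (le_max_right m k) hk)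

end InvariantOnSubgroup

def PD1FixedPointProperty (Λ : Type*) [Group Λ] : Prop :=
  ∀ D : Set (Λ → ℂ), D.Nonempty → IsCompact D → Convex ℝ D → D ⊆ PD1 Λ → ConjInvSet Λ D →
    ∃ ψ ∈ D, ConjInvFn ψ

theorem PD1FixedPointProperty.nonempty_inter_conjInvOn {Γ : Type*} [Group Γ] {H : Subgroup Γ}
    (hH : PD1FixedPointProperty H) {C : Set (Γ → ℂ)} (hne : C.Nonempty) (hcpt : IsCompact C)
    (hconv : Convex ℝ C) (hsub : C ⊆ PD1 Γ) (hinv : ConjInvSet Γ C) :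
    (C ∩ conjInvOn H).Nonempty := by
  let restrict := LinearMap.funLeft ℝ ℂ H.subtype
  have hrestrict : Continuous restrict := continuous_pi fun _ => continuous_apply _
  obtain ⟨_, ⟨φ, hφ, rfl⟩, hψ⟩ := hH (restrict '' C) (hne.image _) (hcpt.image hrestrict)
    (hconv.linear_image restrict) (image_subset_iff.mpr fun φ hφ => comp_mem_PD1 (hsub hφ) _)
    (hinv.image_comp H.subtype)
  exact ⟨φ, hφ, conjInvFn_comp_subtype_iff.mp hψ⟩

theorem character_in_invariant_compact_convex_of_increasing_union_general
    {Γ : Type*} [Group Γ]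
    (Γn : ℕ → Subgroup Γ) (hmono : Monotone Γn) (hunion : ∀ g : Γ, ∃ n, g ∈ Γn n)
    (C : Set (Γ → ℂ)) (hne : C.Nonempty) (hcpt : IsCompact C) (hconv : Convex ℝ C)
    (hsub : C ⊆ PD1 Γ) (hinv : ConjInvSet Γ C)
    (hloc : ∀ (n : ℕ) (D : Set (↥(Γn n) → ℂ)), D.Nonempty → IsCompact D → Convex ℝ D →
      D ⊆ PD1 ↥(Γn n) → ConjInvSet ↥(Γn n) D → ∃ ψ ∈ D, ConjInvFn ψ) :
    ∃ φ ∈ C, ConjInvFn φ := by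
  obtain ⟨φ, hφ⟩ := IsCompact.nonempty_iInter_of_sequence_nonempty_isCompact_isClosed
    (fun n => C ∩ conjInvOn (Γn n))
    (fun n => inter_subset_inter_right C (conjInvOn_anti (hmono n.le_succ)))
    (fun n => PD1FixedPointProperty.nonempty_inter_conjInvOn (hloc n) hne hcpt hconv hsub hinv)
    (hcpt.inter_right (isClosed_conjInvOn _))
    (fun n => hcpt.isClosed.inter (isClosed_conjInvOn _))
  rw [mem_iInter] at hφ
  exact ⟨φ, (hφ 0).1, conjInvFn_of_forall_mem_conjInvOn hmono hunion fun n => (hφ n).2⟩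

/-- if Γ = ⋃ₙ Γₙ is an increasing union of subgroups each of which has the fixed
point property for nonempty compact convex conjugation-invariant subsets of PD₁, then every
nonempty compact convex conjugation-invariant subset C ⊆ PD₁(Γ) contains a character of Γ. -/
theorem character_in_invariant_compact_convex_of_increasing_union
    {Γ : Type*} [Group Γ] [Countable Γ]
    (Γn : ℕ → Subgroup Γ) (hmono : Monotone Γn) (hunion : ∀ g : Γ, ∃ n, g ∈ Γn n)
    (C : Set (Γ → ℂ)) (hne : C.Nonempty) (hcpt : IsCompact C) (hconv : Convex ℝ C)
    (hsub : C ⊆ PD1 Γ) (hinv : ConjInvSet Γ C)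
    (hloc : ∀ (n : ℕ) (D : Set (↥(Γn n) → ℂ)), D.Nonempty → IsCompact D → Convex ℝ D →
      D ⊆ PD1 ↥(Γn n) → ConjInvSet ↥(Γn n) D → ∃ ψ ∈ D, ConjInvFn ψ) :
    ∃ φ ∈ C, ConjInvFn φ :=
  character_in_invariant_compact_convex_of_increasing_union_general Γn hmono hunion C hne hcpt hconv
    hsub hinv hloc
end

section
/- Let G be a locally compact second countable group, μ a Borel probability measure on G whose support generates a dense subsemigroup of G, and let (M, φ) be a von Neumann algebra with a faithful normal state φ, on which G acts continuously by automorphisms σ such that φ is μ-stationary: ∫ φ∘σ_g⁻¹ dμ(g) = φ. If x ∈ M satisfies T_μ(x) = x where T_μ(x) = ∫ σ_g⁻¹(x) dμ(g), then σ_g(x) = x for all g ∈ G. -/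
/-!
The state `φ` defines the seminorm `‖y‖_φ² = φ(y* y)` on `M`. Writing `f g = σ_{g⁻¹}(x)`, the
mean of `f` is `x` and, by stationarity, the mean of `‖f‖_φ²` is `‖x‖_φ²`; expanding the square
gives `∫ ‖x - f g‖_φ² dμ(g) = 0`, so faithfulness yields `σ_{g⁻¹}(x) = x` for `μ`-a.e. `g`. The
set of such `g` is a closed subsemigroup of full measure, hence contains the support of `μ` and
therefore the closure of the subsemigroup it generates, which is all of `G`.
-/

open MeasureTheory

/-- The topological support of a measure: points all of whose neighborhoods have nonzero
measure. -/
def msupport {G : Type*} [TopologicalSpace G] [MeasurableSpace G] (μ : Measure G) : Set G :=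
  {g | ∀ U ∈ nhds g, μ U ≠ 0}

open ComplexConjugate
open scoped InnerProductSpace ComplexOrder

section VectorFunctional

variable {𝕜 E ι : Type*} [RCLike 𝕜] [NormedAddCommGroup E] [InnerProductSpace 𝕜 E]

theorem ContinuousLinearMap.norm_inner_apply_self_le (z : E →L[𝕜] E) (v : E) :
    ‖⟪v, z v⟫_𝕜‖ ≤ ‖z‖ * ‖v‖ ^ 2 :=
  calc ‖⟪v, z v⟫_𝕜‖ ≤ ‖v‖ * (‖z‖ * ‖v‖) :=
        (norm_inner_le_norm _ _).trans (by gcongr; exact z.le_opNorm v)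
    _ = ‖z‖ * ‖v‖ ^ 2 := by ring

variable {ξ : ι → E}

theorem summable_inner_apply_self (hξ : Summable fun i => ‖ξ i‖ ^ 2) (z : E →L[𝕜] E) :
    Summable fun i => ⟪ξ i, z (ξ i)⟫_𝕜 :=
  .of_norm_bounded (hξ.mul_left ‖z‖) fun i => z.norm_inner_apply_self_le (ξ i)

noncomputable def vectorFunctional (ξ : ι → E) (hξ : Summable fun i => ‖ξ i‖ ^ 2) :
    (E →L[𝕜] E) →L[𝕜] 𝕜 :=
  LinearMap.mkContinuous
    { toFun := fun z => ∑' i, ⟪ξ i, z (ξ i)⟫_𝕜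
      map_add' := fun a b => by
        simp only [add_apply, inner_add_right]
        exact (summable_inner_apply_self hξ a).tsum_add (summable_inner_apply_self hξ b)
      map_smul' := fun c a => by
        simp only [smul_apply, inner_smul_right, RingHom.id_apply,
          smul_eq_mul, tsum_mul_left] }
    (∑' i, ‖ξ i‖ ^ 2) fun z =>
      calc ‖∑' i, ⟪ξ i, z (ξ i)⟫_𝕜‖ ≤ ∑' i, ‖z‖ * ‖ξ i‖ ^ 2 :=
            tsum_of_norm_bounded (hξ.mul_left ‖z‖).hasSum fun i => z.norm_inner_apply_self_le (ξ i)
        _ = (∑' i, ‖ξ i‖ ^ 2) * ‖z‖ := by rw [tsum_mul_left, mul_comm]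

variable (hξ : Summable fun i => ‖ξ i‖ ^ 2)

@[simp]
theorem vectorFunctional_apply (z : E →L[𝕜] E) :
    vectorFunctional ξ hξ z = ∑' i, ⟪ξ i, z (ξ i)⟫_𝕜 :=
  rfl

variable [CompleteSpace E]

theorem vectorFunctional_star_apply (z : E →L[𝕜] E) :
    vectorFunctional ξ hξ (star z) = ∑' i, ⟪z (ξ i), ξ i⟫_𝕜 := by
  simp only [vectorFunctional_apply, ContinuousLinearMap.star_eq_adjoint,
    ContinuousLinearMap.adjoint_inner_right]

theorem vectorFunctional_star (z : E →L[𝕜] E) :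
    vectorFunctional ξ hξ (star z) = conj (vectorFunctional ξ hξ z) := by
  rw [vectorFunctional_star_apply, vectorFunctional_apply, starRingEnd_apply, tsum_star]
  exact tsum_congr fun i => (inner_conj_symm _ _).symm

theorem vectorFunctional_star_mul_self (y : E →L[𝕜] E) :
    vectorFunctional ξ hξ (star y * y) = ((∑' i, ‖y (ξ i)‖ ^ 2 : ℝ) : 𝕜) := by
  simp only [vectorFunctional_apply, mul_apply_eq_comp,
    ContinuousLinearMap.star_eq_adjoint, ContinuousLinearMap.adjoint_inner_right,
    inner_self_eq_norm_sq_to_K, RCLike.ofReal_tsum, RCLike.ofReal_pow]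

theorem vectorFunctional_star_mul_self_nonneg (y : E →L[𝕜] E) :
    0 ≤ vectorFunctional ξ hξ (star y * y) := by
  rw [vectorFunctional_star_mul_self]
  exact RCLike.ofReal_nonneg.mpr (tsum_nonneg fun i => by positivity)

-- `⟪·, ·⟫` is conjugate-linear in its first argument, so this `φ` is conjugate-linear.
theorem exists_positive_functional_eq_comp_star {φ : (E →L[𝕜] E) → 𝕜}
    (hξ : Summable fun i => ‖ξ i‖ ^ 2) (hφ : ∀ z, φ z = ∑' i, ⟪z (ξ i), ξ i⟫_𝕜) :
    ∃ Φ : (E →L[𝕜] E) →L[𝕜] 𝕜, (∀ z, φ z = Φ (star z)) ∧ (∀ z, Φ (star z) = conj (Φ z)) ∧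
      ∀ y, 0 ≤ Φ (star y * y) :=
  ⟨vectorFunctional ξ hξ, fun z => by rw [hφ, vectorFunctional_star_apply],
    vectorFunctional_star hξ, vectorFunctional_star_mul_self_nonneg hξ⟩

end VectorFunctional

section Variance

variable {G : Type*} [MeasurableSpace G] {μ : Measure G}

theorem RCLike.ae_eq_zero_of_nonneg_of_integral_eq_zero {𝕜 : Type*} [RCLike 𝕜] {F : G → 𝕜}
    (hF : ∀ g, 0 ≤ F g) (hFi : Integrable F μ) (h : ∫ g, F g ∂μ = 0) : F =ᵐ[μ] 0 := by
  have hre : (fun g => re (F g)) =ᵐ[μ] 0 := by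
    refine (integral_eq_zero_iff_of_nonneg (fun g => (nonneg_iff.mp (hF g)).1) hFi.re).mp ?_
    rw [integral_re hFi, h, map_zero]
  filter_upwards [hre] with g hg
  exact ext (by simpa using hg) (by simpa using (nonneg_iff.mp (hF g)).2)

variable [IsProbabilityMeasure μ] {A : Type*} [NormedRing A] [NormedAlgebra ℂ A] [StarRing A]
  [CompleteSpace A]

theorem ae_apply_star_sub_mul_sub_eq_zero (Φ : A →L[ℂ] ℂ) (hΦ_star : ∀ a, Φ (star a) = conj (Φ a))
    (hΦ_pos : ∀ y, 0 ≤ Φ (star y * y)) {f : G → A} {x : A} (hf : Integrable f μ)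
    (hfx : ∫ g, f g ∂μ = x) (hff : Integrable (fun g => Φ (star (f g) * f g)) μ)
    (hstat : ∫ g, Φ (star (f g) * f g) ∂μ = Φ (star x * x)) :
    ∀ᵐ g ∂μ, Φ (star (x - f g) * (x - f g)) = 0 := by
  set L : A →L[ℂ] ℂ := Φ.comp (ContinuousLinearMap.mul ℂ A (star x))
  have hexpand : ∀ g, Φ (star (x - f g) * (x - f g)) =
      Φ (star x * x) - L (f g) - conj (L (f g)) + Φ (star (f g) * f g) := fun g => by
    have hsq : star (x - f g) * (x - f g) =
        star x * x - star x * f g - star (star x * f g) + star (f g) * f g := by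
      rw [star_sub, star_mul, star_star]; noncomm_ring
    rw [hsq, map_add, map_sub, map_sub, hΦ_star]
    rfl
  have hL : Integrable (fun g => L (f g)) μ := L.integrable_comp hf
  have hLc : Integrable (fun g => conj (L (f g))) μ :=
    Complex.conjCLE.toContinuousLinearMap.integrable_comp hL
  have hL_int : ∫ g, L (f g) ∂μ = Φ (star x * x) := by
    rw [L.integral_comp_comm hf, hfx]
    rfl
  have hxx_real : conj (Φ (star x * x)) = Φ (star x * x) := by
    rw [← hΦ_star, star_mul, star_star]
  have hconstL : Integrable (fun g => Φ (star x * x) - L (f g)) μ := (integrable_const _).sub hL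
  have hlin : Integrable (fun g => Φ (star x * x) - L (f g) - conj (L (f g))) μ := hconstL.sub hLc
  simp_rw [hexpand]
  refine RCLike.ae_eq_zero_of_nonneg_of_integral_eq_zero (fun g => hexpand g ▸ hΦ_pos _)
    (hlin.add hff) ?_
  rw [integral_add hlin hff, integral_sub hconstL hLc,
    integral_sub (integrable_const _) hL, integral_const, integral_conj, hL_int, hstat, hxx_real,
    probReal_univ, one_smul]
  ring

end Variance

theorem ContinuousLinearMap.isClosed_setOf_eq_of_continuous_inner {X 𝕜 E : Type*}
    [TopologicalSpace X] [RCLike 𝕜] [NormedAddCommGroup E] [InnerProductSpace 𝕜 E]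
    {F : X → E →L[𝕜] E} (hF : ∀ v w, Continuous fun g => ⟪F g v, w⟫_𝕜) (T : E →L[𝕜] E) :
    IsClosed {g | F g = T} := by
  have : {g | F g = T} = ⋂ v, ⋂ w, {g | ⟪F g v, w⟫_𝕜 = ⟪T v, w⟫_𝕜} := by
    ext g
    simp only [Set.mem_ofPred_eq, Set.mem_iInter]
    exact ⟨fun h v w => h ▸ rfl, fun h => ext fun v => ext_inner_right 𝕜 (h v)⟩
  rw [this]
  exact isClosed_iInter fun v => isClosed_iInter fun w => isClosed_eq (hF v w) continuous_const

theorem Subsemigroup.eq_top_of_ae_mem {G : Type*} [Mul G] [TopologicalSpace G]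
    [MeasurableSpace G] {μ : Measure G} (hgen : Dense (closure (msupport μ) : Set G))
    {S : Subsemigroup G} (hS : IsClosed (S : Set G)) (hae : ∀ᵐ g ∂μ, g ∈ S) : S = ⊤ := by
  have hsupp : msupport μ ⊆ S := fun _ hg =>
    by_contra fun hgS => hg _ (hS.isOpen_compl.mem_nhds hgS) (ae_iff.mp hae)
  have hdense := (hgen.mono (closure_le.mpr hsupp)).closure_eq
  rw [hS.closure_eq] at hdense
  exact SetLike.coe_injective hdense

theorem fixed_of_Tmu_fixed_general
    {G : Type*} [Group G] [TopologicalSpace G] [IsTopologicalGroup G]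
    [MeasurableSpace G]
    (μ : Measure G) [IsProbabilityMeasure μ]
    (hgen : Dense ((Subsemigroup.closure (msupport μ) : Subsemigroup G) : Set G))
    {H : Type*} [NormedAddCommGroup H] [InnerProductSpace ℂ H] [CompleteSpace H]
    (M : VonNeumannAlgebra H)
    (σ : G → (H →L[ℂ] H) → (H →L[ℂ] H))
    (hmem : ∀ g : G, ∀ x ∈ M, σ g x ∈ M)
    (hmul : ∀ g h : G, ∀ x ∈ M, σ (g * h) x = σ g (σ h x))
    (hlin : ∀ g : G, ∀ x ∈ M, ∀ y ∈ M, ∀ c : ℂ, σ g (c • x + y) = c • σ g x + σ g y)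
    (hmulhom : ∀ g : G, ∀ x ∈ M, ∀ y ∈ M, σ g (x * y) = σ g x * σ g y)
    (hstar : ∀ g : G, ∀ x ∈ M, σ g (star x) = star (σ g x))
    (hcont : ∀ x ∈ M, ∀ ξ η : H, Continuous fun g : G => (@inner ℂ H _ (σ g x ξ) η))
    (φ : (H →L[ℂ] H) → ℂ)
    (hφnormal : ∃ ξ : ℕ → H, (∑' i, ‖ξ i‖ ^ 2) = 1 ∧
      ∀ x : H →L[ℂ] H, φ x = ∑' i, @inner ℂ H _ (x (ξ i)) (ξ i))
    (hφfaithful : ∀ x : H →L[ℂ] H, x ∈ M → x.IsPositive → φ x = 0 → x = 0)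
    (hφstat : ∀ x ∈ M, ∫ g : G, φ (σ g⁻¹ x) ∂μ = φ x)
    (x : H →L[ℂ] H) (hx : x ∈ M) (hfix : (∫ g : G, σ g⁻¹ x ∂μ) = x) :
    ∀ g : G, σ g x = x := by
  rcases eq_or_ne x 0 with rfl | hx0
  · exact fun g => by simpa using hlin g 0 M.zero_mem 0 M.zero_mem 1
  obtain ⟨ξ, hξ_one, hφ⟩ := hφnormal
  have hξ : Summable fun i => ‖ξ i‖ ^ 2 := by
    by_contra h
    simp [tsum_eq_zero_of_not_summable h] at hξ_one
  obtain ⟨Φ, hφΦ, hΦ_star, hΦ_pos⟩ := exists_positive_functional_eq_comp_star hξ hφ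
  have hφΦ_sq : ∀ y, φ (star y * y) = Φ (star y * y) := fun y => by
    rw [hφΦ, star_mul, star_star]
  have hΦ_faithful : ∀ y ∈ M, Φ (star y * y) = 0 → y = 0 := fun y hy h =>
    (CStarRing.star_mul_self_eq_zero_iff y).mp <| hφfaithful _ (mul_mem (star_mem hy) hy)
      ((ContinuousLinearMap.nonneg_iff_isPositive _).mp (star_mul_self_nonneg y))
      ((hφΦ_sq y).trans h)
  have hf : Integrable (fun g => σ g⁻¹ x) μ := by
    by_contra h
    exact hx0 (hfix.symm.trans (integral_undef h))
  have hstat : ∫ g, Φ (star (σ g⁻¹ x) * σ g⁻¹ x) ∂μ = Φ (star x * x) := by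
    simpa only [hmulhom _ _ (star_mem hx) _ hx, hstar _ _ hx, hφΦ_sq]
      using hφstat _ (mul_mem (star_mem hx) hx)
  -- otherwise the integral would be `0 ≠ Φ (x* x)`
  have hff : Integrable (fun g => Φ (star (σ g⁻¹ x) * σ g⁻¹ x)) μ := by
    by_contra h
    exact hx0 (hΦ_faithful x hx (hstat.symm.trans (integral_undef h)))
  have hae : ∀ᵐ g ∂μ, σ g⁻¹ x = x := by
    filter_upwards [ae_apply_star_sub_mul_sub_eq_zero Φ hΦ_star hΦ_pos hf hfix hff hstat]
      with g hg
    exact (sub_eq_zero.mp (hΦ_faithful _ (sub_mem hx (hmem _ x hx)) hg)).symm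
  let B : Subsemigroup G :=
    { carrier := {g | σ g⁻¹ x = x}
      mul_mem' := fun {a b} (ha : σ a⁻¹ x = x) (hb : σ b⁻¹ x = x) =>
        show σ (a * b)⁻¹ x = x by rw [mul_inv_rev, hmul _ _ x hx, ha, hb] }
  have hB : IsClosed (B : Set G) :=
    ContinuousLinearMap.isClosed_setOf_eq_of_continuous_inner
      (fun v w => (hcont x hx v w).comp continuous_inv) x
  intro g
  have hg : σ g⁻¹⁻¹ x = x := (B.eq_top_iff'.mp (B.eq_top_of_ae_mem hgen hB hae)) g⁻¹
  rwa [inv_inv] at hg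

/-- let G be an lcsc group, μ a generating Borel probability measure on G
(its support generates a dense subsemigroup), and M a von Neumann algebra with a continuous
G-action σ by *-automorphisms and a faithful normal μ-stationary state φ. If x ∈ M satisfies
T_μ(x) = ∫ σ_g⁻¹(x) dμ(g) = x, then σ_g(x) = x for all g ∈ G. -/
theorem fixed_of_Tmu_fixed
    {G : Type*} [Group G] [TopologicalSpace G] [IsTopologicalGroup G]
    [LocallyCompactSpace G] [SecondCountableTopology G] [MeasurableSpace G] [BorelSpace G]
    (μ : Measure G) [IsProbabilityMeasure μ]
    (hgen : Dense ((Subsemigroup.closure (msupport μ) : Subsemigroup G) : Set G))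
    {H : Type*} [NormedAddCommGroup H] [InnerProductSpace ℂ H] [CompleteSpace H]
    (M : VonNeumannAlgebra H)
    (σ : G → (H →L[ℂ] H) → (H →L[ℂ] H))
    (hmem : ∀ g : G, ∀ x ∈ M, σ g x ∈ M)
    (hone : ∀ x ∈ M, σ 1 x = x)
    (hmul : ∀ g h : G, ∀ x ∈ M, σ (g * h) x = σ g (σ h x))
    (hlin : ∀ g : G, ∀ x ∈ M, ∀ y ∈ M, ∀ c : ℂ, σ g (c • x + y) = c • σ g x + σ g y)
    (hmulhom : ∀ g : G, ∀ x ∈ M, ∀ y ∈ M, σ g (x * y) = σ g x * σ g y)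
    (hstar : ∀ g : G, ∀ x ∈ M, σ g (star x) = star (σ g x))
    (hcont : ∀ x ∈ M, ∀ ξ η : H, Continuous fun g : G => (@inner ℂ H _ (σ g x ξ) η))
    (φ : (H →L[ℂ] H) → ℂ)
    (hφnormal : ∃ ξ : ℕ → H, (∑' i, ‖ξ i‖ ^ 2) = 1 ∧
      ∀ x : H →L[ℂ] H, φ x = ∑' i, @inner ℂ H _ (x (ξ i)) (ξ i))
    (hφfaithful : ∀ x : H →L[ℂ] H, x ∈ M → x.IsPositive → φ x = 0 → x = 0)
    (hφstat : ∀ x ∈ M, ∫ g : G, φ (σ g⁻¹ x) ∂μ = φ x)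
    (x : H →L[ℂ] H) (hx : x ∈ M) (hfix : (∫ g : G, σ g⁻¹ x ∂μ) = x) :
    ∀ g : G, σ g x = x :=
  fixed_of_Tmu_fixed_general μ hgen M σ hmem hmul hlin hmulhom hstar hcont φ hφnormal hφfaithful
    hφstat x hx hfix
end

section
/- Let Γ be a lattice in an lcsc group G = G₁ × G₂ and let ι: Γ → G₁ be the first projection restricted to Γ, assumed to have dense image. Let π: Γ → U(H) be a unitary representation. Then the set H_ι of vectors v ∈ H such that ‖π(γₙ)v − v‖ → 0 for every sequence (γₙ) in Γ with ι(γₙ) → e in G₁, is a closed Γ-invariant linear subspace of H, and the representation of Γ on H_ι extends to a continuous unitary representation of G₁ on H_ι. -/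
/-!
For an `ι`-continuous vector `v`, the identity `dist (π a v) (π b v) = dist (π (b⁻¹ * a) v) v`
makes the orbit map `γ ↦ π γ v` Cauchy along `comap ι (𝓝 g)` for every `g : G` (this filter is
proper because `ι` has dense range), so by completeness it has a limit there. These limits extend
`π` to `G`: linearity, the norm and the group law pass to the limit by uniqueness of limits, and
continuity in `g` holds for any such extension through a dense map into a regular space.
Closedness of the space of `ι`-continuous vectors is equicontinuity of the isometries `π γ`.
-/

open Filter Topology

theorem DenseRange.comap_nhds_neBot {X Y : Type*} [TopologicalSpace X] {e : Y → X}
    (he : DenseRange e) (x : X) : (comap e (𝓝 x)).NeBot :=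
  comap_neBot fun _ hs =>
    let ⟨_, hs', a, ha⟩ := mem_closure_iff_nhds.1 (he x) _ hs
    ⟨a, ha ▸ hs'⟩

/-- Unlike `IsDenseInducing.continuous_extend`, no inducing hypothesis on `e` is needed. -/
theorem DenseRange.continuous_of_tendsto_comap_nhds {X Y Z : Type*} [TopologicalSpace X]
    [TopologicalSpace Z] [RegularSpace Z] {e : Y → X} (he : DenseRange e) {f : Y → Z}
    {φ : X → Z} (hφ : ∀ x, Tendsto f (comap e (𝓝 x)) (𝓝 (φ x))) : Continuous φ := by
  refine continuous_iff_continuousAt.2 fun x => (closed_nhds_basis (φ x)).tendsto_right_iff.2 ?_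
  rintro V ⟨hV, hVclosed⟩
  obtain ⟨U, hU, hUV⟩ := mem_comap.1 (hφ x hV)
  filter_upwards [eventually_mem_nhds_iff.2 hU] with y hy
  have := he.comap_nhds_neBot y
  exact hVclosed.mem_of_tendsto (hφ y) (mem_comap.2 ⟨U, hy, hUV⟩)

theorem dist_apply_apply {Γ R E : Type*} [Group Γ] [Semiring R] [SeminormedAddCommGroup E]
    [Module R E] (π : Γ →* (E ≃ₗᵢ[R] E)) (a b : Γ) (v : E) :
    dist (π a v) (π b v) = dist (π (b⁻¹ * a) v) v := by
  rw [← (π b).dist_map (π (b⁻¹ * a) v), ← Function.comp_apply (f := π b),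
    ← LinearIsometryEquiv.coe_mul, ← map_mul, mul_inv_cancel_left]

section ContinuousVectors

variable {Γ G 𝕜 E : Type*} [Group Γ] [Group G] [TopologicalSpace G]
  [NormedField 𝕜] [NormedAddCommGroup E] [NormedSpace 𝕜 E]
  (ι : Γ →* G) (π : Γ →* (E ≃ₗᵢ[𝕜] E))

/-- The `ι`-continuous vectors: those whose orbit map is continuous at `1` for the topology on `Γ`
pulled back from `G` along `ι`. -/
def continuousVectors : Submodule 𝕜 E where
  carrier := {v | Tendsto (fun γ => π γ v) (comap ι (𝓝 1)) (𝓝 v)}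
  add_mem' hv hw := by simpa only [Set.mem_ofPred_eq, map_add] using hv.add hw
  zero_mem' := by simpa only [Set.mem_ofPred_eq, map_zero] using tendsto_const_nhds
  smul_mem' c _ hv := by simpa only [Set.mem_ofPred_eq, map_smul] using hv.const_smul c

variable {ι π}

theorem mem_continuousVectors {v : E} :
    v ∈ continuousVectors ι π ↔ Tendsto (fun γ => π γ v) (comap ι (𝓝 1)) (𝓝 v) :=
  Iff.rfl

theorem mem_continuousVectors_iff_seq [FirstCountableTopology G] {v : E} :
    v ∈ continuousVectors ι π ↔ ∀ γ : ℕ → Γ,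
      Tendsto (fun n => ι (γ n)) atTop (𝓝 1) → Tendsto (fun n => π (γ n) v) atTop (𝓝 v) := by
  simp only [mem_continuousVectors, tendsto_iff_seq_tendsto (f := fun γ => π γ v),
    tendsto_comap_iff, Function.comp_def]

variable (ι π)

theorem isClosed_continuousVectors : IsClosed (continuousVectors ι π : Set E) :=
  (LipschitzWith.uniformEquicontinuous (fun γ => π γ) 1 fun γ => (π γ).lipschitz)
    |>.equicontinuous.isClosed_setOfPred_tendsto continuous_id

theorem tendsto_conj_comap_nhds_one [ContinuousMul G] (γ : Γ) :
    Tendsto (fun δ => γ⁻¹ * δ * γ) (comap ι (𝓝 1)) (comap ι (𝓝 1)) := by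
  refine tendsto_comap_iff.2 ?_
  simpa [Function.comp_def] using
    ((tendsto_comap : Tendsto ι _ (𝓝 1)).const_mul (ι γ⁻¹)).mul_const (ι γ)

theorem apply_mem_continuousVectors [ContinuousMul G] (γ : Γ) {v : E}
    (hv : v ∈ continuousVectors ι π) :
    π γ v ∈ continuousVectors ι π := by
  have := ((π γ).continuous.tendsto v).comp (hv.comp (tendsto_conj_comap_nhds_one ι γ))
  simpa [mem_continuousVectors, Function.comp_def, ← mul_assoc] using this


variable [IsTopologicalGroup G] [CompleteSpace E] {ι π}

theorem exists_tendsto_orbit_comap_nhds (hι : DenseRange ι) {v : E}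
    (hv : v ∈ continuousVectors ι π) (g : G) :
    ∃ w, Tendsto (fun γ => π γ v) (comap ι (𝓝 g)) (𝓝 w) := by
  have := hι.comap_nhds_neBot g
  refine cauchy_map_iff_exists_tendsto.1 (cauchy_map_iff'.2 ?_)
  have hquot : Tendsto (fun p : Γ × Γ => p.2⁻¹ * p.1) (comap ι (𝓝 g) ×ˢ comap ι (𝓝 g))
      (comap ι (𝓝 1)) := by
    refine tendsto_comap_iff.2 ?_
    have hg : Tendsto ι (comap ι (𝓝 g)) (𝓝 g) := tendsto_comap
    simpa [Function.comp_def] using (hg.comp tendsto_snd).inv.mul (hg.comp tendsto_fst)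
  rw [tendsto_uniformity_iff_dist_tendsto_zero]
  simpa only [Function.comp_def, dist_apply_apply] using
    tendsto_iff_dist_tendsto_zero.1 (hv.comp hquot)

variable (ι π) in
/-- The extension of the orbit map of `v` to `G`; meaningful for `ι`-continuous `v`. -/
noncomputable def orbitLimit (g : G) (v : E) : E :=
  limUnder (comap ι (𝓝 g)) fun γ => π γ v

section OrbitLimit

variable (hι : DenseRange ι) {v : E} (hv : v ∈ continuousVectors ι π)
include hι hv

theorem tendsto_orbitLimit (g : G) :
    Tendsto (fun γ => π γ v) (comap ι (𝓝 g)) (𝓝 (orbitLimit ι π g v)) :=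
  tendsto_nhds_limUnder (exists_tendsto_orbit_comap_nhds hι hv g)

theorem orbitLimit_eq {g : G} {w : E} (h : Tendsto (fun γ => π γ v) (comap ι (𝓝 g)) (𝓝 w)) :
    orbitLimit ι π g v = w :=
  have := hι.comap_nhds_neBot g
  tendsto_nhds_unique (tendsto_orbitLimit hι hv g) h

theorem continuous_orbitLimit : Continuous fun g => orbitLimit ι π g v :=
  hι.continuous_of_tendsto_comap_nhds (tendsto_orbitLimit hι hv)

theorem orbitLimit_one : orbitLimit ι π 1 v = v :=
  orbitLimit_eq hι hv hv

theorem orbitLimit_mul_left (δ : Γ) (g : G) :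
    orbitLimit ι π (ι δ * g) v = π δ (orbitLimit ι π g v) := by
  have := hι.comap_nhds_neBot g
  have hδ : Tendsto (δ * ·) (comap ι (𝓝 g)) (comap ι (𝓝 (ι δ * g))) :=
    tendsto_comap_iff.2 <| by
      simpa [Function.comp_def] using (tendsto_comap : Tendsto ι _ (𝓝 g)).const_mul (ι δ)
  refine tendsto_nhds_unique ((tendsto_orbitLimit hι hv _).comp hδ) ?_
  simpa only [Function.comp_def, map_mul, LinearIsometryEquiv.coe_mul] using
    ((π δ).continuous.tendsto _).comp (tendsto_orbitLimit hι hv g)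

theorem orbitLimit_apply (γ : Γ) : orbitLimit ι π (ι γ) v = π γ v := by
  simpa [orbitLimit_one hι hv] using orbitLimit_mul_left hι hv γ 1

theorem orbitLimit_mem (g : G) : orbitLimit ι π g v ∈ continuousVectors ι π := by
  have hg : Tendsto (fun δ => ι δ * g) (comap ι (𝓝 1)) (𝓝 g) := by
    simpa using (tendsto_comap : Tendsto ι _ (𝓝 1)).mul_const g
  simpa only [mem_continuousVectors, ← orbitLimit_mul_left hι hv, Function.comp_def] using
    ((continuous_orbitLimit hι hv).tendsto g).comp hg

theorem orbitLimit_mul (g h : G) :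
    orbitLimit ι π (g * h) v = orbitLimit ι π g (orbitLimit ι π h v) := by
  have hgh : Tendsto (fun γ => ι γ * h) (comap ι (𝓝 g)) (𝓝 (g * h)) :=
    (tendsto_comap : Tendsto ι _ (𝓝 g)).mul_const h
  refine (orbitLimit_eq hι (orbitLimit_mem hι hv h) ?_).symm
  simpa only [Function.comp_def, orbitLimit_mul_left hι hv] using
    ((continuous_orbitLimit hι hv).tendsto _).comp hgh

theorem orbitLimit_add {w : E} (hw : w ∈ continuousVectors ι π) (g : G) :
    orbitLimit ι π g (v + w) = orbitLimit ι π g v + orbitLimit ι π g w :=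
  orbitLimit_eq hι (add_mem hv hw) <| by
    simpa only [map_add] using (tendsto_orbitLimit hι hv g).add (tendsto_orbitLimit hι hw g)

theorem orbitLimit_smul (c : 𝕜) (g : G) : orbitLimit ι π g (c • v) = c • orbitLimit ι π g v :=
  orbitLimit_eq hι (Submodule.smul_mem _ c hv) <| by
    simpa only [map_smul] using (tendsto_orbitLimit hι hv g).const_smul c

theorem norm_orbitLimit (g : G) : ‖orbitLimit ι π g v‖ = ‖v‖ :=
  have := hι.comap_nhds_neBot g
  tendsto_nhds_unique (tendsto_orbitLimit hι hv g).norm <| by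
    simpa only [LinearIsometryEquiv.norm_map] using tendsto_const_nhds

end OrbitLimit

variable (ι π) in
noncomputable def extendedRep (hι : DenseRange ι) :
    G →* (continuousVectors ι π ≃ₗᵢ[𝕜] continuousVectors ι π) where
  toFun g :=
    { toFun v := ⟨orbitLimit ι π g v, orbitLimit_mem hι v.2 g⟩
      invFun v := ⟨orbitLimit ι π g⁻¹ v, orbitLimit_mem hι v.2 g⁻¹⟩
      map_add' v w := Subtype.ext (orbitLimit_add hι v.2 w.2 g)
      map_smul' c v := Subtype.ext (orbitLimit_smul hι v.2 c g)
      left_inv v := Subtype.ext <| show orbitLimit ι π g⁻¹ (orbitLimit ι π g v) = v by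
        rw [← orbitLimit_mul hι v.2, inv_mul_cancel, orbitLimit_one hι v.2]
      right_inv v := Subtype.ext <| show orbitLimit ι π g (orbitLimit ι π g⁻¹ v) = v by
        rw [← orbitLimit_mul hι v.2, mul_inv_cancel, orbitLimit_one hι v.2]
      norm_map' v := norm_orbitLimit hι v.2 g }
  map_one' := LinearIsometryEquiv.ext fun v => Subtype.ext (orbitLimit_one hι v.2)
  map_mul' g h := LinearIsometryEquiv.ext fun v => Subtype.ext (orbitLimit_mul hι v.2 g h)

theorem continuous_extendedRep (hι : DenseRange ι) :
    Continuous fun p : G × continuousVectors ι π => (extendedRep ι π hι p.1 p.2 : E) :=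
  continuous_prod_of_continuous_lipschitzWith' _ 1
    (fun g => (isometry_subtype_coe.comp (extendedRep ι π hι g).isometry).lipschitz)
    fun v => continuous_orbitLimit hι v.2

end ContinuousVectors

theorem continuity_vectors_closed_invariant_and_extension_general
    {G₁ G₂ : Type*} [Group G₁] [TopologicalSpace G₁] [IsTopologicalGroup G₁]
    [SecondCountableTopology G₁]
    [Group G₂]
    (Γ : Subgroup (G₁ × G₂))
    (hdense : DenseRange (fun γ : Γ => ((γ : G₁ × G₂).1)))
    {H : Type*} [NormedAddCommGroup H] [InnerProductSpace ℂ H] [CompleteSpace H]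
    (π : Γ →* (H ≃ₗᵢ[ℂ] H)) :
    ∃ W : Submodule ℂ H,
      (W : Set H) = {v : H | ∀ γ : ℕ → Γ,
          Filter.Tendsto (fun n => ((γ n : G₁ × G₂).1)) Filter.atTop (nhds 1) →
          Filter.Tendsto (fun n => π (γ n) v) Filter.atTop (nhds v)} ∧
      IsClosed (W : Set H) ∧
      (∀ γ : Γ, ∀ v ∈ W, π γ v ∈ W) ∧
      ∃ ρ : G₁ →* (W ≃ₗᵢ[ℂ] W),
        Continuous (fun p : G₁ × W => (ρ p.1 p.2 : H)) ∧
        ∀ (γ : Γ) (v : W), (ρ ((γ : G₁ × G₂).1) v : H) = π γ (v : H) := by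
  let ι : Γ →* G₁ := (MonoidHom.fst G₁ G₂).comp Γ.subtype
  exact ⟨continuousVectors ι π, Set.ext fun _ => mem_continuousVectors_iff_seq,
    isClosed_continuousVectors ι π, apply_mem_continuousVectors ι π,
    extendedRep ι π hdense, continuous_extendedRep hdense,
    fun γ v => orbitLimit_apply hdense v.2 γ⟩

/-- let Γ be a discrete subgroup (lattice) of a product G₁ × G₂ of lcsc groups,
with dense projection ι to G₁, and π a unitary representation of Γ on H. Then the set of
ι-continuous vectors is a closed Γ-invariant subspace of H on which the representation of Γ
extends to a continuous unitary representation of G₁. -/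
theorem continuity_vectors_closed_invariant_and_extension
    {G₁ G₂ : Type*} [Group G₁] [TopologicalSpace G₁] [IsTopologicalGroup G₁]
    [LocallyCompactSpace G₁] [SecondCountableTopology G₁]
    [Group G₂] [TopologicalSpace G₂] [IsTopologicalGroup G₂]
    [LocallyCompactSpace G₂] [SecondCountableTopology G₂]
    (Γ : Subgroup (G₁ × G₂)) [DiscreteTopology Γ]
    (hdense : DenseRange (fun γ : Γ => ((γ : G₁ × G₂).1)))
    {H : Type*} [NormedAddCommGroup H] [InnerProductSpace ℂ H] [CompleteSpace H]
    (π : Γ →* (H ≃ₗᵢ[ℂ] H)) :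
    ∃ W : Submodule ℂ H,
      (W : Set H) = {v : H | ∀ γ : ℕ → Γ,
          Filter.Tendsto (fun n => ((γ n : G₁ × G₂).1)) Filter.atTop (nhds 1) →
          Filter.Tendsto (fun n => π (γ n) v) Filter.atTop (nhds v)} ∧
      IsClosed (W : Set H) ∧
      (∀ γ : Γ, ∀ v ∈ W, π γ v ∈ W) ∧
      ∃ ρ : G₁ →* (W ≃ₗᵢ[ℂ] W),
        Continuous (fun p : G₁ × W => (ρ p.1 p.2 : H)) ∧
        ∀ (γ : Γ) (v : W), (ρ ((γ : G₁ × G₂).1) v : H) = π γ (v : H) :=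
  continuity_vectors_closed_invariant_and_extension_general Γ hdense π
end
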